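/- For every integer M ≥ 1 and every ω ∈ ℂ with |ω| = 1 and ω^M ≠ −1, the inverse M-cut conformal map ψ_M(ω) = ((√(1+ω^M) − 1)/(√(1+ω^M) + 1))^{1/M} (principal branches) satisfies |ψ_M(ω)| ≥ (3 − 2√2)^{1/M} = (√2+1)^{−2/M}, with equality if and only if ω^M = 1. -/

import Mathlib

/-- The inverse `M`-cut conformal map
`ψ_M(ω) = ((√(1+ω^M) - 1)/(√(1+ω^M) + 1))^{1/M}`, with principal branches. -/
noncomputable def mCutInv (M : ℕ) (ω : ℂ) : ℂ :=
  (((1 + ω ^ M) ^ ((1 : ℂ) / 2) - 1) / ((1 + ω ^ M) ^ ((1 : ℂ) / 2) + 1)) ^ ((1 : ℂ) / M)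

set_option maxHeartbeats 1000000 in
/-- For every `M ≥ 1` and `ω` on the unit circle with `ω^M ≠ -1`, one has
`|ψ_M(ω)| ≥ (3 - 2√2)^{1/M} = (√2+1)^{-2/M}`, with equality iff `ω^M = 1`. -/
theorem mCutInv_abs_on_circle (M : ℕ) (hM : 1 ≤ M) (ω : ℂ)
    (hω : ‖ω‖ = 1) (hcut : ω ^ M ≠ -1) :
    ((3 - 2 * Real.sqrt 2) ^ ((1 : ℝ) / M) = ((Real.sqrt 2 + 1) ^ ((2 : ℝ) / M))⁻¹) ∧
    (3 - 2 * Real.sqrt 2) ^ ((1 : ℝ) / M) ≤ ‖mCutInv M ω‖ ∧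
    (‖mCutInv M ω‖ = (3 - 2 * Real.sqrt 2) ^ ((1 : ℝ) / M) ↔ ω ^ M = 1) := by
  have sqrt2_sq : Real.sqrt 2 ^ 2 = 2 := Real.sq_sqrt (by norm_num)
  have sqrt2_pos : 0 < Real.sqrt 2 := Real.sqrt_pos.2 (by norm_num)
  have sqrt2_gt : 1 < Real.sqrt 2 := by nlinarith
  have sqrt2_lt : Real.sqrt 2 < 3/2 := by nlinarith
  have hMpos : (0:ℝ) < (M:ℝ) := by exact_mod_cast Nat.lt_of_lt_of_le Nat.zero_lt_one hM
  have hMinv_pos : (0:ℝ) < 1 / (M:ℝ) := by positivity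
  set u := ω ^ M with hu_def
  have hu : ‖u‖ = 1 := by rw [hu_def, norm_pow, hω, one_pow]
  set s := (1 + u) ^ ((1:ℂ)/2) with hs_def
  have hs2 : s ^ 2 = 1 + u := by
    rw [hs_def, show (1:ℂ)/2 = (((2:ℕ):ℂ))⁻¹ by norm_num]
    exact Complex.cpow_nat_inv_pow _ (by norm_num)
  set A := ‖s - 1‖ with hA_def
  set B := ‖s + 1‖ with hB_def
  have hAB : A * B = 1 := by
    rw [hA_def, hB_def, ← norm_mul]
    have h1 : (s - 1) * (s + 1) = u := by linear_combination hs2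
    rw [h1, hu]
  set C := ‖s‖ with hC_def
  have hC2 : C ^ 2 = ‖1 + u‖ := by rw [hC_def, ← norm_pow, hs2]
  have hCle : C ≤ Real.sqrt 2 := by
    have h1 : ‖1 + u‖ ≤ 2 := by
      calc ‖1 + u‖ ≤ ‖(1:ℂ)‖ + ‖u‖ := norm_add_le 1 u
      _ = 2 := by rw [norm_one, hu]; norm_num
    nlinarith [norm_nonneg s, hC2]
  have hBle : B ≤ Real.sqrt 2 + 1 := by
    have h1 : B ≤ C + 1 := by
      have := norm_add_le s 1
      rwa [norm_one] at this
    linarith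
  have hBpos : 0 < B := by
    rcases lt_or_eq_of_le (norm_nonneg (s + 1)) with h | h
    · exact h
    · exfalso; rw [hB_def] at hAB; rw [← h, mul_zero] at hAB; norm_num at hAB
  have hApos : 0 < A := by
    rcases lt_or_eq_of_le (norm_nonneg (s - 1)) with h | h
    · exact h
    · exfalso; rw [hA_def] at hAB; rw [← h, zero_mul] at hAB; norm_num at hAB
  have hA_lb : Real.sqrt 2 - 1 ≤ A := by
    nlinarith [mul_le_mul_of_nonneg_left hBle (by linarith : (0:ℝ) ≤ Real.sqrt 2 - 1)]
  have hEq : ‖mCutInv M ω‖ = (A ^ 2) ^ ((1:ℝ)/M) := by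
    have hdiv : A / B = A ^ 2 := by
      rw [div_eq_iff (ne_of_gt hBpos)]
      linear_combination (-A) * hAB
    simp only [mCutInv]
    rw [← hu_def, ← hs_def, show (1:ℂ)/(M:ℂ) = (((1/M : ℝ)):ℂ) by push_cast; ring,
      Complex.norm_cpow_real, norm_div, ← hA_def, ← hB_def, hdiv]
  have h3pos : 0 < 3 - 2 * Real.sqrt 2 := by nlinarith
  have hkey : 3 - 2 * Real.sqrt 2 ≤ A ^ 2 := by nlinarith
  have hiff : A ^ 2 = 3 - 2 * Real.sqrt 2 ↔ u = 1 := by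
    constructor
    · intro h
      have hA' : A = Real.sqrt 2 - 1 := by nlinarith
      have hB' : B = Real.sqrt 2 + 1 := by
        have h2 : (Real.sqrt 2 - 1) * B = 1 := hA' ▸ hAB
        have h3 : (Real.sqrt 2 - 1) * (Real.sqrt 2 + 1) = 1 := by nlinarith
        exact mul_left_cancel₀ (by nlinarith : Real.sqrt 2 - 1 ≠ 0) (h2.trans h3.symm)
      have hC_ge : Real.sqrt 2 ≤ C := by
        have h1 : B ≤ C + 1 := by
          have := norm_add_le s 1
          rwa [norm_one] at this
        linarith [hB' ▸ h1]
      have hC : C = Real.sqrt 2 := le_antisymm hCle hC_ge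
      have hre_im : s.re ^ 2 + s.im ^ 2 = 2 := by
        have h1 := Complex.sq_norm s
        rw [← hC_def, hC, sqrt2_sq, Complex.normSq_apply] at h1
        linear_combination -h1
      have hBsq : (s.re + 1) ^ 2 + s.im ^ 2 = (Real.sqrt 2 + 1) ^ 2 := by
        have h1 := Complex.sq_norm (s + 1)
        rw [← hB_def, hB'] at h1
        simp only [Complex.normSq_apply, Complex.add_re, Complex.add_im, Complex.one_re,
          Complex.one_im, add_zero] at h1
        linear_combination -h1
      have hre : s.re = Real.sqrt 2 := by
        linear_combination hBsq/2 - hre_im/2 + sqrt2_sq/2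
      have him : s.im = 0 := by
        have h0 : s.im ^ 2 = 0 := by rw [hre] at hre_im; linear_combination hre_im - sqrt2_sq
        exact pow_eq_zero_iff two_ne_zero |>.mp h0
      have hs_eq : s = (Real.sqrt 2 : ℂ) := by
        apply Complex.ext <;> simp [hre, him]
      have h2 : (1:ℂ) + u = 2 := by
        rw [← hs2, hs_eq, ← Complex.ofReal_pow, sqrt2_sq]; norm_num
      linear_combination h2
    · intro h
      have hs_eq : s = (Real.sqrt 2 : ℂ) := by
        rw [hs_def, h, show ((1:ℂ)+1) = ((2:ℝ):ℂ) by norm_num,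
          show (1:ℂ)/2 = (((1/2:ℝ)):ℂ) by norm_num,
          ← Complex.ofReal_cpow (by norm_num : (0:ℝ) ≤ 2), ← Real.sqrt_eq_rpow]
      have hAval : A = Real.sqrt 2 - 1 := by
        rw [hA_def, hs_eq, show ((Real.sqrt 2 : ℂ) - 1) = ((Real.sqrt 2 - 1 : ℝ) : ℂ) by
          push_cast; ring, Complex.norm_real, Real.norm_eq_abs, abs_of_nonneg (by linarith)]
      rw [hAval]; linear_combination sqrt2_sq
  refine ⟨?_, ?_, ?_⟩
  · rw [show ((2:ℝ)/M) = 2 * (1/M) by ring,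
      Real.rpow_mul (by positivity : (0:ℝ) ≤ Real.sqrt 2 + 1),
      ← Real.inv_rpow (by positivity)]
    congr 1
    rw [Real.rpow_two]
    have hmul : (3 - 2 * Real.sqrt 2) * (Real.sqrt 2 + 1) ^ 2 = 1 := by
      linear_combination (-(2 * Real.sqrt 2 + 1)) * sqrt2_sq
    exact eq_inv_of_mul_eq_one_left hmul
  · rw [hEq]
    exact Real.rpow_le_rpow (le_of_lt h3pos) hkey (le_of_lt hMinv_pos)
  · rw [hEq]
    constructor
    · intro h
      apply hiff.mp
      by_contra hne
      have hlt : 3 - 2*Real.sqrt 2 < A ^ 2 := lt_of_le_of_ne hkey (Ne.symm hne)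
      have hlt2 := Real.rpow_lt_rpow (le_of_lt h3pos) hlt hMinv_pos
      exact absurd h.symm (ne_of_lt hlt2)
    · intro h
      rw [hiff.mpr h]
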